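/- For any μ₀, μ₁, μ₀′, μ₁′ ∈ ℝ, σ > 0, and every t ∈ ℝ, 4·‖f_{μ₀,μ₁} − f_{μ₀′,μ₁′}‖_TV ≥ e^{−σ²t²/2} · |e^{itμ₀} + e^{itμ₁} − e^{itμ₀′} − e^{itμ₁′}|. -/

import Mathlib

open MeasureTheory ProbabilityTheory Real
open scoped ENNReal NNReal

/-- Total variation distance: `sup_A (f(A) - f'(A))` over measurable sets `A`. -/
noncomputable def tvDist {Ω : Type*} [MeasurableSpace Ω] (f f' : Measure Ω) : ℝ :=
  ⨆ A : {A : Set Ω // MeasurableSet A}, ((f A.1).toReal - (f' A.1).toReal)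

/-- One-dimensional two-component Gaussian mixture with component variance `v`. -/
noncomputable def mix1v (m₀ m₁ : ℝ) (v : ℝ≥0) : Measure ℝ :=
  (1/2 : ℝ≥0∞) • gaussianReal m₀ v + (1/2 : ℝ≥0∞) • gaussianReal m₁ v

/-- One-dimensional mixture `½·N(μ₀,σ²) + ½·N(μ₁,σ²)`. -/
noncomputable def mix1d (μ₀ μ₁ σ : ℝ) : Measure ℝ :=
  mix1v μ₀ μ₁ ⟨σ^2, sq_nonneg σ⟩

lemma charGauss (m σ t : ℝ) (hσ : 0 < σ) :
    ∫ x : ℝ, Complex.exp (Complex.I * t * x) ∂(gaussianReal m ⟨σ^2, sq_nonneg σ⟩) =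
      Complex.exp (Complex.I * t * m - σ^2 * t^2 / 2) := by
  have hv : (⟨σ^2, sq_nonneg σ⟩ : ℝ≥0) ≠ 0 := by
    intro h
    exact pow_ne_zero 2 hσ.ne' (congrArg NNReal.toReal h)
  set v : ℝ≥0 := ⟨σ^2, sq_nonneg σ⟩ with hvdef
  have hvpos : (0:ℝ) < (v:ℝ) := by show (0:ℝ) < σ^2; positivity
  have hrw : gaussianReal m v = volume.withDensity
      (fun x => ((Real.toNNReal (gaussianPDFReal m v x) : ℝ≥0) : ℝ≥0∞)) := by
    rw [gaussianReal_of_var_ne_zero m hv]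
    rfl
  have hmeas : Measurable (fun x => Real.toNNReal (gaussianPDFReal m v x)) :=
    (measurable_gaussianPDFReal m v).real_toNNReal
  have key : ∀ g : ℝ → ℂ, ∫ x, g x ∂(gaussianReal m v)
      = ∫ x : ℝ, (gaussianPDFReal m v x : ℂ) * g x := by
    intro g
    rw [hrw, integral_withDensity_eq_integral_smul hmeas]
    congr 1
    ext x
    rw [NNReal.smul_def, Real.coe_toNNReal _ (gaussianPDFReal_nonneg m v x)]
    simp [Complex.real_smul]
  set V : ℝ := (v : ℝ) with hV
  have hVσ : V = σ^2 := rfl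
  have hVpos : (0:ℝ) < V := hvpos
  have hVne : (V:ℂ) ≠ 0 := by
    exact_mod_cast ne_of_gt hVpos
  set b : ℂ := -(1/(2*(V:ℂ))) with hb
  have hbre : b.re < 0 := by
    rw [hb]
    simp [Complex.div_re, Complex.normSq]
    positivity
  set K : ℂ := (((Real.sqrt (2 * π * V))⁻¹ : ℝ) : ℂ) with hK
  set d : ℂ := -((m:ℂ)^2/(2*(V:ℂ))) with hd
  have hint : ∀ w : ℂ, ∫ x : ℝ, (gaussianPDFReal m v x : ℂ) * Complex.exp (w * x)
      = K * ((π / -b) ^ (1/2 : ℂ) * Complex.exp (d - ((m:ℂ)/(V:ℂ) + w)^2 / (4 * b))) := by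
    intro w
    rw [← integral_cexp_quadratic hbre ((m:ℂ)/(V:ℂ) + w) d, ← integral_const_mul]
    congr 1
    ext x
    unfold gaussianPDFReal
    push_cast
    rw [mul_assoc, ← Complex.exp_add]
    congr 1
    · rw [hK, hV, Complex.ofReal_inv]
    · congr 1
      rw [hb, hd, ← hV]
      field_simp
      ring
  have h0 : (1 : ℂ) = K * ((π / -b) ^ (1/2 : ℂ)
      * Complex.exp (d - ((m:ℂ)/(V:ℂ) + 0)^2 / (4 * b))) := by
    rw [← hint 0]
    simp only [zero_mul, Complex.exp_zero, mul_one]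
    have : ∫ (x : ℝ), ((gaussianPDFReal m v x : ℝ) : ℂ) = ((∫ x, gaussianPDFReal m v x : ℝ) : ℂ) :=
      integral_ofReal
    rw [this, integral_gaussianPDFReal_eq_one m hv, Complex.ofReal_one]
  have h1 := hint (Complex.I * t)
  rw [key, h1]
  have hexpne : Complex.exp (d - ((m:ℂ)/(V:ℂ) + 0)^2 / (4 * b)) ≠ 0 := Complex.exp_ne_zero _
  have hKN : K * (π / -b) ^ (1/2 : ℂ) = (Complex.exp (d - ((m:ℂ)/(V:ℂ) + 0)^2 / (4 * b)))⁻¹ := by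
    refine eq_inv_of_mul_eq_one_left ?_
    rw [mul_assoc]
    exact h0.symm
  rw [← mul_assoc, hKN, ← Complex.exp_neg, ← Complex.exp_add]
  congr 1
  have hσV : ((σ:ℂ))^2 = (V:ℂ) := by rw [hVσ]; push_cast; ring
  rw [hb, hd, hσV]
  field_simp
  linear_combination (4 * (V:ℂ)^2 * (t:ℂ)^2) * Complex.I_sq

lemma tv_bound (f g : Measure ℝ) [IsProbabilityMeasure f] [IsProbabilityMeasure g]
    (u : ℝ → ℂ) (hu : Continuous u) (hbd : ∀ x, ‖u x‖ ≤ 1) :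
    ‖(∫ x, u x ∂f) - ∫ x, u x ∂g‖ ≤ 2 * tvDist f g := by
  obtain ⟨S, hSm, hS1, hS2⟩ := hahn_decomposition (μ := f) (ν := g)
  have hint : ∀ (μ : Measure ℝ) [IsFiniteMeasure μ], Integrable u μ := fun μ _ =>
    Integrable.mono' (integrable_const 1) hu.aestronglyMeasurable
      (Filter.Eventually.of_forall hbd)
  have hgle : g.restrict S ≤ f.restrict S := by
    rw [Measure.le_iff]
    intro A hA
    rw [Measure.restrict_apply hA, Measure.restrict_apply hA]
    exact hS1 _ (hA.inter hSm) Set.inter_subset_right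
  have hfle : f.restrict Sᶜ ≤ g.restrict Sᶜ := by
    rw [Measure.le_iff]
    intro A hA
    rw [Measure.restrict_apply hA, Measure.restrict_apply hA]
    exact hS2 _ (hA.inter hSm.compl) Set.inter_subset_right
  set ρ := f.restrict S - g.restrict S with hρdef
  set ρ' := g.restrict Sᶜ - f.restrict Sᶜ with hρ'def
  have hρ : ρ + g.restrict S = f.restrict S := Measure.sub_add_cancel_of_le hgle
  have hρ' : ρ' + f.restrict Sᶜ = g.restrict Sᶜ := Measure.sub_add_cancel_of_le hfle
  have hfi := hint f
  have hgi := hint g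
  have hsplit : (∫ x, u x ∂f) - ∫ x, u x ∂g = (∫ x, u x ∂ρ) - ∫ x, u x ∂ρ' := by
    rw [← integral_add_compl hSm hfi, ← integral_add_compl hSm hgi]
    have h1 : ∫ x in S, u x ∂f = (∫ x, u x ∂ρ) + ∫ x in S, u x ∂g := by
      rw [← integral_add_measure (hint ρ) (hint (g.restrict S)), hρ]
    have h2 : ∫ x in Sᶜ, u x ∂g = (∫ x, u x ∂ρ') + ∫ x in Sᶜ, u x ∂f := by
      rw [← integral_add_measure (hint ρ') (hint (f.restrict Sᶜ)), hρ']
    rw [h1, h2]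
    ring
  have hgS : g S ≤ f S := hS1 S hSm subset_rfl
  have hfS : f Sᶜ ≤ g Sᶜ := hS2 Sᶜ hSm.compl subset_rfl
  have hρu : (ρ Set.univ).toReal = (f S).toReal - (g S).toReal := by
    rw [hρdef, Measure.sub_apply MeasurableSet.univ hgle, Measure.restrict_apply_univ,
      Measure.restrict_apply_univ, ENNReal.toReal_sub_of_le hgS (measure_ne_top f S)]
  have hρ'u : (ρ' Set.univ).toReal = (g Sᶜ).toReal - (f Sᶜ).toReal := by
    rw [hρ'def, Measure.sub_apply MeasurableSet.univ hfle, Measure.restrict_apply_univ,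
      Measure.restrict_apply_univ, ENNReal.toReal_sub_of_le hfS (measure_ne_top g Sᶜ)]
  have hfc : (f S).toReal + (f Sᶜ).toReal = 1 := by
    rw [← ENNReal.toReal_add (measure_ne_top f S) (measure_ne_top f Sᶜ),
      measure_add_measure_compl hSm, measure_univ, ENNReal.toReal_one]
  have hgc : (g S).toReal + (g Sᶜ).toReal = 1 := by
    rw [← ENNReal.toReal_add (measure_ne_top g S) (measure_ne_top g Sᶜ),
      measure_add_measure_compl hSm, measure_univ, ENNReal.toReal_one]
  have hb1 : ‖∫ x, u x ∂ρ‖ ≤ (ρ Set.univ).toReal := by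
    have := norm_integral_le_of_norm_le_const (μ := ρ) (f := u) (C := 1)
      (Filter.Eventually.of_forall hbd)
    simpa [measureReal_def] using this
  have hb2 : ‖∫ x, u x ∂ρ'‖ ≤ (ρ' Set.univ).toReal := by
    have := norm_integral_le_of_norm_le_const (μ := ρ') (f := u) (C := 1)
      (Filter.Eventually.of_forall hbd)
    simpa [measureReal_def] using this
  have htv : (f S).toReal - (g S).toReal ≤ tvDist f g := by
    have hbdd : BddAbove (Set.range fun A : {A : Set ℝ // MeasurableSet A} =>
        ((f A.1).toReal - (g A.1).toReal)) := by
      refine ⟨1, ?_⟩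
      rintro y ⟨A, rfl⟩
      have h1 : (f A.1).toReal ≤ 1 := by
        rw [← ENNReal.toReal_one]
        exact ENNReal.toReal_mono ENNReal.one_ne_top prob_le_one
      have h2 : 0 ≤ (g A.1).toReal := ENNReal.toReal_nonneg
      simp only
      linarith
    exact le_ciSup hbdd ⟨S, hSm⟩
  calc ‖(∫ x, u x ∂f) - ∫ x, u x ∂g‖ = ‖(∫ x, u x ∂ρ) - ∫ x, u x ∂ρ'‖ := by rw [hsplit]
    _ ≤ ‖∫ x, u x ∂ρ‖ + ‖∫ x, u x ∂ρ'‖ := norm_sub_le _ _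
    _ ≤ (ρ Set.univ).toReal + (ρ' Set.univ).toReal := add_le_add hb1 hb2
    _ = 2 * ((f S).toReal - (g S).toReal) := by rw [hρu, hρ'u]; linarith
    _ ≤ 2 * tvDist f g := by linarith

instance mix1v_prob (m₀ m₁ : ℝ) (v : ℝ≥0) : IsProbabilityMeasure (mix1v m₀ m₁ v) := by
  constructor
  rw [mix1v, Measure.add_apply, Measure.smul_apply, Measure.smul_apply,
    measure_univ, measure_univ, smul_eq_mul, mul_one, ENNReal.div_add_div_same]
  rw [one_add_one_eq_two]
  exact ENNReal.div_self (two_ne_zero) (ENNReal.ofNat_ne_top)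

instance mix1d_prob (μ₀ μ₁ σ : ℝ) : IsProbabilityMeasure (mix1d μ₀ μ₁ σ) := by
  rw [mix1d]; exact mix1v_prob _ _ _

theorem stmt_5 (μ₀ μ₁ μ₀' μ₁' σ : ℝ) (hσ : 0 < σ) (t : ℝ) :
    4 * tvDist (mix1d μ₀ μ₁ σ) (mix1d μ₀' μ₁' σ) ≥
      Real.exp (-(σ^2 * t^2) / 2) *
        ‖(Complex.exp (Complex.I * t * μ₀) + Complex.exp (Complex.I * t * μ₁)
          - Complex.exp (Complex.I * t * μ₀') - Complex.exp (Complex.I * t * μ₁'))‖ := by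
  set c : ℝ := σ^2 * t^2 / 2 with hc
  set u : ℝ → ℂ := fun x => Complex.exp (Complex.I * t * x) with hu
  have hucont : Continuous u := by
    apply Complex.continuous_exp.comp
    continuity
  have hubd : ∀ x, ‖u x‖ ≤ 1 := by
    intro x
    rw [hu]
    simp only [Complex.norm_exp]
    have : (Complex.I * t * x).re = 0 := by simp
    rw [this, Real.exp_zero]
  have hmix : ∀ a b : ℝ, ∫ x, u x ∂(mix1d a b σ) =
      (Complex.exp (Complex.I * t * a) + Complex.exp (Complex.I * t * b))
        * Complex.exp (-(c:ℝ)) / 2 := by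
    intro a b
    have hint : ∀ (μ : Measure ℝ) [IsFiniteMeasure μ], Integrable u μ := fun μ _ =>
      Integrable.mono' (integrable_const 1) hucont.aestronglyMeasurable
        (Filter.Eventually.of_forall hubd)
    unfold mix1d mix1v
    rw [integral_add_measure
      ((@hint (gaussianReal a ⟨σ^2, sq_nonneg σ⟩)
        (by haveI := instIsProbabilityMeasureGaussianReal a ⟨σ^2, sq_nonneg σ⟩; infer_instance)).smul_measure (by norm_num))
        ((@hint (gaussianReal b ⟨σ^2, sq_nonneg σ⟩)
        (by haveI := instIsProbabilityMeasureGaussianReal b ⟨σ^2, sq_nonneg σ⟩; infer_instance)).smul_measure (by norm_num)),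
      integral_smul_measure, integral_smul_measure]
    rw [show ∫ x, u x ∂(gaussianReal a ⟨σ^2, sq_nonneg σ⟩)
        = Complex.exp (Complex.I * t * a - σ^2 * t^2 / 2) from charGauss a σ t hσ,
      show ∫ x, u x ∂(gaussianReal b ⟨σ^2, sq_nonneg σ⟩)
        = Complex.exp (Complex.I * t * b - σ^2 * t^2 / 2) from charGauss b σ t hσ]
    have h2 : ((1:ℝ≥0∞)/2).toReal = (1:ℝ)/2 := by
      rw [ENNReal.toReal_div]
      norm_num
    rw [h2]
    have hes : ∀ w : ℂ, Complex.exp (w - (σ:ℂ)^2 * (t:ℂ)^2 / 2)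
        = Complex.exp w * Complex.exp (-(c:ℝ)) := by
      intro w
      rw [← Complex.exp_add]
      congr 1
      rw [hc]
      push_cast
      ring
    rw [hes, hes]
    rw [Complex.real_smul, Complex.real_smul]
    push_cast
    ring
  have hdiff := tv_bound (mix1d μ₀ μ₁ σ) (mix1d μ₀' μ₁' σ) u hucont hubd
  rw [hmix μ₀ μ₁, hmix μ₀' μ₁'] at hdiff
  set A : ℂ := Complex.exp (Complex.I * t * μ₀) + Complex.exp (Complex.I * t * μ₁)
    - Complex.exp (Complex.I * t * μ₀') - Complex.exp (Complex.I * t * μ₁') with hA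
  have hnorm : ‖(Complex.exp (Complex.I * t * μ₀) + Complex.exp (Complex.I * t * μ₁))
        * Complex.exp (-(c:ℝ)) / 2
      - (Complex.exp (Complex.I * t * μ₀') + Complex.exp (Complex.I * t * μ₁'))
        * Complex.exp (-(c:ℝ)) / 2‖ = ‖A‖ * Real.exp (-c) / 2 := by
    have : (Complex.exp (Complex.I * t * μ₀) + Complex.exp (Complex.I * t * μ₁))
        * Complex.exp (-(c:ℝ)) / 2
      - (Complex.exp (Complex.I * t * μ₀') + Complex.exp (Complex.I * t * μ₁'))
        * Complex.exp (-(c:ℝ)) / 2 = A * Complex.exp (-(c:ℝ)) / 2 := by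
      rw [hA]; ring
    rw [this]
    rw [norm_div, norm_mul, Complex.norm_exp]
    have : (-(c:ℂ)).re = -c := by simp
    rw [this]
    norm_num
  rw [hnorm] at hdiff
  have hrw2 : -(σ^2 * t^2) / 2 = -c := by rw [hc]; ring
  rw [ge_iff_le, hrw2]
  nlinarith [Real.exp_pos (-c), norm_nonneg A]
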